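/- Let X₁, X₂ be real Banach spaces and X = X₁ × X₂ with norm ‖(x,y)‖ = (‖x‖² + ‖y‖²)^{1/2}. Let A₁ : X₁ → X₁ and A₂ : X₂ → X₂ be bounded linear operators with bounded inverses satisfying ‖exp(−sA_j)‖ ≤ 1 for all s ≥ 0, and let B₁ : X₂ → X₁, B₂ : X₁ → X₂ be bounded. Define E_j(τ) = exp(−τA_j), X_j(τ) = (∫₀^τ exp(−σA_j) dσ) ∘ B_j, T₁(τ)(x,y) = (E₁(τ)x + X₁(τ)y, y), T₂(τ)(x,y) = (x, X₂(τ)x + E₂(τ)y), and 𝓐(x,y) = (A₁x, A₂y). Then there exists a constant C > 0, depending only on ‖B₁‖, ‖B₂‖, ‖A₁⁻¹‖, ‖A₂⁻¹‖, such that for all τ ≥ 0, ‖(T₁(τ) ∘ T₂(τ) − T₂(τ) ∘ T₁(τ)) ∘ 𝓐⁻¹‖ ≤ C·τ². -/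

import Mathlib

/-!
In block form `T₁ = [[E₁, X₁], [0, 1]]` and `T₂ = [[1, 0], [X₂, E₂]]`, so the commutator composed
with `𝓐⁻¹` is `[[X₁X₂A₁⁻¹, -X₁(1 - E₂)A₂⁻¹], [X₂(1 - E₁)A₁⁻¹, -X₂X₁A₂⁻¹]]`. Every entry is a
product of two factors of size `O(τ)`: `‖X_j(τ)‖ ≤ τ‖B_j‖` because the semigroups are contractive,
and `(1 - E_j(τ))A_j⁻¹ = ∫₀^τ E_j(σ) dσ` because `d/dσ E_j(σ) = -E_j(σ)A_j`.
-/

noncomputable section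

open scoped Topology

variable {X₁ X₂ : Type*} [NormedAddCommGroup X₁] [NormedSpace ℝ X₁] [CompleteSpace X₁]
  [NormedAddCommGroup X₂] [NormedSpace ℝ X₂] [CompleteSpace X₂]

/-- The operator exponential `exp (-τ A)` of a bounded operator `A`. -/
def expOp {X : Type*} [NormedAddCommGroup X] [NormedSpace ℝ X] [CompleteSpace X]
    (A : X →L[ℝ] X) (τ : ℝ) : X →L[ℝ] X :=
  NormedSpace.exp (-(τ • A))

/-- The coupling operator `X(τ) = (∫₀^τ exp(-σ A) dσ) ∘ B`. -/
def Xop {X Y : Type*} [NormedAddCommGroup X] [NormedSpace ℝ X] [CompleteSpace X]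
    [NormedAddCommGroup Y] [NormedSpace ℝ Y] (A : X →L[ℝ] X) (B : Y →L[ℝ] X) (τ : ℝ) :
    Y →L[ℝ] X :=
  (∫ σ in (0:ℝ)..τ, expOp A σ).comp B

/-- Lift of a block operator on `X₁ × X₂` to the `ℓ²`-product space
`X = X₁ × X₂` with norm `‖(x,y)‖ = (‖x‖² + ‖y‖²)^(1/2)`. -/
def toL2 (M : (X₁ × X₂) →L[ℝ] (X₁ × X₂)) :
    WithLp 2 (X₁ × X₂) →L[ℝ] WithLp 2 (X₁ × X₂) :=
  ((WithLp.prodContinuousLinearEquiv 2 ℝ X₁ X₂).symm.toContinuousLinearMap.comp M).comp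
    (WithLp.prodContinuousLinearEquiv 2 ℝ X₁ X₂).toContinuousLinearMap

/-- The split-step operator `T₁(τ)(x,y) = (exp(-τA₁)x + X₁(τ)y, y)`. -/
def T1 (A₁ : X₁ →L[ℝ] X₁) (B₁ : X₂ →L[ℝ] X₁) (τ : ℝ) :
    WithLp 2 (X₁ × X₂) →L[ℝ] WithLp 2 (X₁ × X₂) :=
  toL2 (((expOp A₁ τ).coprod (Xop A₁ B₁ τ)).prod (ContinuousLinearMap.snd ℝ X₁ X₂))

/-- The split-step operator `T₂(τ)(x,y) = (x, X₂(τ)x + exp(-τA₂)y)`. -/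
def T2 (A₂ : X₂ →L[ℝ] X₂) (B₂ : X₁ →L[ℝ] X₂) (τ : ℝ) :
    WithLp 2 (X₁ × X₂) →L[ℝ] WithLp 2 (X₁ × X₂) :=
  toL2 ((ContinuousLinearMap.fst ℝ X₁ X₂).prod ((Xop A₂ B₂ τ).coprod (expOp A₂ τ)))

/-- The split-step approximation operator `T(τ) = T₂(τ) ∘ T₁(τ)`. -/
def Tfull (A₁ : X₁ →L[ℝ] X₁) (A₂ : X₂ →L[ℝ] X₂) (B₁ : X₂ →L[ℝ] X₁) (B₂ : X₁ →L[ℝ] X₂)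
    (τ : ℝ) : WithLp 2 (X₁ × X₂) →L[ℝ] WithLp 2 (X₁ × X₂) :=
  (T2 A₂ B₂ τ).comp (T1 A₁ B₁ τ)

/-- The full operator `𝓒(x,y) = (A₁x - B₁y, A₂y - B₂x)`. -/
def opC (A₁ : X₁ →L[ℝ] X₁) (A₂ : X₂ →L[ℝ] X₂) (B₁ : X₂ →L[ℝ] X₁) (B₂ : X₁ →L[ℝ] X₂) :
    WithLp 2 (X₁ × X₂) →L[ℝ] WithLp 2 (X₁ × X₂) :=
  toL2 ((A₁.coprod (-B₁)).prod ((-B₂).coprod A₂))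

/-- The diagonal operator `𝓐(x,y) = (A₁x, A₂y)`. -/
def opA (A₁ : X₁ →L[ℝ] X₁) (A₂ : X₂ →L[ℝ] X₂) :
    WithLp 2 (X₁ × X₂) →L[ℝ] WithLp 2 (X₁ × X₂) :=
  toL2 (A₁.prodMap A₂)

/-- The off-diagonal coupling operator `𝓑(x,y) = (B₁y, B₂x)`. -/
def opB (B₁ : X₂ →L[ℝ] X₁) (B₂ : X₁ →L[ℝ] X₂) :
    WithLp 2 (X₁ × X₂) →L[ℝ] WithLp 2 (X₁ × X₂) :=
  toL2 (((0 : X₁ →L[ℝ] X₁).coprod B₁).prod (B₂.coprod (0 : X₂ →L[ℝ] X₂)))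

theorem WithLp.prod_norm_le_add {p : ENNReal} [Fact (1 ≤ p)] {α β : Type*}
    [SeminormedAddCommGroup α] [SeminormedAddCommGroup β] (w : WithLp p (α × β)) :
    ‖w‖ ≤ ‖w.fst‖ + ‖w.snd‖ := by
  calc ‖w‖ = ‖WithLp.toLp p (w.fst, (0 : β)) + WithLp.toLp p ((0 : α), w.snd)‖ := by
        rw [← WithLp.toLp_add, Prod.mk_add_mk, add_zero, zero_add]
        rfl
    _ ≤ ‖w.fst‖ + ‖w.snd‖ := by
        grw [norm_add_le, WithLp.norm_toLp_fst, WithLp.norm_toLp_snd]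

section OperatorExponential

variable {X : Type*} [NormedAddCommGroup X] [NormedSpace ℝ X] [CompleteSpace X] (A : X →L[ℝ] X)

lemma hasDerivAt_expOp (σ : ℝ) : HasDerivAt (expOp A) (-(expOp A σ * A)) σ := by
  have h := hasDerivAt_exp_smul_const (𝕂 := ℝ) (-A) σ
  simp only [smul_neg, mul_neg] at h
  exact h

lemma continuous_expOp : Continuous (expOp A) :=
  continuous_iff_continuousAt.2 fun σ => (hasDerivAt_expOp A σ).continuousAt

lemma integral_expOp_mul_self (τ : ℝ) :
    (∫ σ in (0:ℝ)..τ, expOp A σ) * A = 1 - expOp A τ := by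
  have hmul := ((ContinuousLinearMap.mul ℝ (X →L[ℝ] X)).flip A).intervalIntegral_comp_comm
    ((continuous_expOp A).intervalIntegrable (μ := MeasureTheory.volume) 0 τ)
  have hftc := intervalIntegral.integral_eq_sub_of_hasDerivAt (fun σ _ => hasDerivAt_expOp A σ)
    (((continuous_expOp A).mul continuous_const).neg.intervalIntegrable 0 τ)
  simp only [ContinuousLinearMap.flip_apply, ContinuousLinearMap.mul_apply',
    intervalIntegral.integral_neg] at hmul hftc
  rw [← hmul, ← neg_neg (∫ σ in (0:ℝ)..τ, expOp A σ * A), hftc]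
  simp [expOp]

lemma integral_expOp_eq_sub_comp {Ainv : X →L[ℝ] X} (h : A.comp Ainv = ContinuousLinearMap.id ℝ X)
    (τ : ℝ) : ∫ σ in (0:ℝ)..τ, expOp A σ = (1 - expOp A τ).comp Ainv := by
  rw [← integral_expOp_mul_self, ContinuousLinearMap.mul_def, ContinuousLinearMap.comp_assoc, h,
    ContinuousLinearMap.comp_id]

variable {A}

lemma norm_integral_expOp_le (hA : ∀ s : ℝ, 0 ≤ s → ‖expOp A s‖ ≤ 1) {τ : ℝ} (hτ : 0 ≤ τ) :
    ‖∫ σ in (0:ℝ)..τ, expOp A σ‖ ≤ τ := by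
  have h := intervalIntegral.norm_integral_le_of_norm_le_const (C := 1)
    fun σ hσ => hA σ (Set.uIoc_of_le hτ ▸ hσ).1.le
  rwa [one_mul, sub_zero, abs_of_nonneg hτ] at h

lemma norm_Xop_le {Y : Type*} [NormedAddCommGroup Y] [NormedSpace ℝ Y] (B : Y →L[ℝ] X)
    (hA : ∀ s : ℝ, 0 ≤ s → ‖expOp A s‖ ≤ 1) {τ : ℝ} (hτ : 0 ≤ τ) : ‖Xop A B τ‖ ≤ τ * ‖B‖ :=
  (ContinuousLinearMap.opNorm_comp_le _ _).trans (by gcongr; exact norm_integral_expOp_le hA hτ)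

end OperatorExponential

section BlockOperators

variable {U V : Type*} [NormedAddCommGroup U] [NormedSpace ℝ U] [NormedAddCommGroup V]
  [NormedSpace ℝ V]

lemma toL2_comp (M N : (U × V) →L[ℝ] (U × V)) : (toL2 M).comp (toL2 N) = toL2 (M.comp N) := by
  ext; simp [toL2]

lemma toL2_sub (M N : (U × V) →L[ℝ] (U × V)) : toL2 M - toL2 N = toL2 (M - N) := by
  ext; simp [toL2]

lemma norm_toL2_block_le (f : U →L[ℝ] U) (g : V →L[ℝ] U) (h : U →L[ℝ] V) (k : V →L[ℝ] V) :
    ‖toL2 ((f.coprod g).prod (h.coprod k))‖ ≤ ‖f‖ + ‖g‖ + ‖h‖ + ‖k‖ := by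
  refine ContinuousLinearMap.opNorm_le_bound _ (by positivity) fun v => ?_
  have := WithLp.norm_fst_le U v
  have := WithLp.norm_snd_le U v
  calc ‖toL2 ((f.coprod g).prod (h.coprod k)) v‖
      ≤ ‖f v.fst + g v.snd‖ + ‖h v.fst + k v.snd‖ := WithLp.prod_norm_le_add _
    _ ≤ ‖f‖ * ‖v.fst‖ + ‖g‖ * ‖v.snd‖ + (‖h‖ * ‖v.fst‖ + ‖k‖ * ‖v.snd‖) := by
      gcongr <;> exact norm_add_le_of_le (ContinuousLinearMap.le_opNorm _ _)
        (ContinuousLinearMap.le_opNorm _ _)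
    _ ≤ ‖f‖ * ‖v‖ + ‖g‖ * ‖v‖ + (‖h‖ * ‖v‖ + ‖k‖ * ‖v‖) := by gcongr
    _ = (‖f‖ + ‖g‖ + ‖h‖ + ‖k‖) * ‖v‖ := by ring

open ContinuousLinearMap in
lemma toL2_commutator_comp_prodMap (E₁ : U →L[ℝ] U) (K₁ : V →L[ℝ] U) (K₂ : U →L[ℝ] V)
    (E₂ : V →L[ℝ] V) (P : U →L[ℝ] U) (Q : V →L[ℝ] V) :
    ((toL2 ((E₁.coprod K₁).prod (snd ℝ U V))).comp (toL2 ((fst ℝ U V).prod (K₂.coprod E₂))) -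
        (toL2 ((fst ℝ U V).prod (K₂.coprod E₂))).comp (toL2 ((E₁.coprod K₁).prod (snd ℝ U V)))).comp
        (toL2 (P.prodMap Q)) =
      toL2 (((K₁.comp (K₂.comp P)).coprod (-K₁.comp ((1 - E₂).comp Q))).prod
        ((K₂.comp ((1 - E₁).comp P)).coprod (-K₂.comp (K₁.comp Q)))) := by
  rw [toL2_comp, toL2_comp, toL2_sub, toL2_comp]
  congr 1
  ext x <;> simp

end BlockOperators

theorem commutator_comp_opAinv_norm_le_general (A₁ : X₁ →L[ℝ] X₁) (A₂ : X₂ →L[ℝ] X₂)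
    (B₁ : X₂ →L[ℝ] X₁) (B₂ : X₁ →L[ℝ] X₂)
    (A₁inv : X₁ →L[ℝ] X₁) (A₂inv : X₂ →L[ℝ] X₂)
    (hA₁inv' : A₁.comp A₁inv = ContinuousLinearMap.id ℝ X₁)
    (hA₂inv' : A₂.comp A₂inv = ContinuousLinearMap.id ℝ X₂)
    (hA₁ : ∀ s : ℝ, 0 ≤ s → ‖expOp A₁ s‖ ≤ 1)
    (hA₂ : ∀ s : ℝ, 0 ≤ s → ‖expOp A₂ s‖ ≤ 1) :
    ∃ C > 0, ∀ τ : ℝ, 0 ≤ τ →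
      ‖((T1 A₁ B₁ τ).comp (T2 A₂ B₂ τ) - (T2 A₂ B₂ τ).comp (T1 A₁ B₁ τ)).comp
          (opA A₁inv A₂inv)‖ ≤ C * τ ^ 2 := by
  refine ⟨‖B₁‖ * ‖B₂‖ * (‖A₁inv‖ + ‖A₂inv‖) + ‖B₁‖ + ‖B₂‖ + 1, by positivity, fun τ hτ => ?_⟩
  rw [T1, T2, opA, toL2_commutator_comp_prodMap, ← integral_expOp_eq_sub_comp A₁ hA₁inv',
    ← integral_expOp_eq_sub_comp A₂ hA₂inv']
  open ContinuousLinearMap in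
  grw [norm_toL2_block_le, norm_neg, norm_neg, opNorm_comp_le, opNorm_comp_le, opNorm_comp_le,
    opNorm_comp_le, opNorm_comp_le, opNorm_comp_le, norm_Xop_le B₁ hA₁ hτ, norm_Xop_le B₂ hA₂ hτ,
    norm_integral_expOp_le hA₁ hτ, norm_integral_expOp_le hA₂ hτ]
  nlinarith [sq_nonneg τ]

/-- The commutator of the split-step operators satisfies
`‖(T₁(τ)T₂(τ) - T₂(τ)T₁(τ)) 𝓐⁻¹‖ ≤ C τ²`. -/
theorem commutator_comp_opAinv_norm_le (A₁ : X₁ →L[ℝ] X₁) (A₂ : X₂ →L[ℝ] X₂)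
    (B₁ : X₂ →L[ℝ] X₁) (B₂ : X₁ →L[ℝ] X₂)
    (A₁inv : X₁ →L[ℝ] X₁) (A₂inv : X₂ →L[ℝ] X₂)
    (hA₁inv : A₁inv.comp A₁ = ContinuousLinearMap.id ℝ X₁)
    (hA₁inv' : A₁.comp A₁inv = ContinuousLinearMap.id ℝ X₁)
    (hA₂inv : A₂inv.comp A₂ = ContinuousLinearMap.id ℝ X₂)
    (hA₂inv' : A₂.comp A₂inv = ContinuousLinearMap.id ℝ X₂)
    (hA₁ : ∀ s : ℝ, 0 ≤ s → ‖expOp A₁ s‖ ≤ 1)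
    (hA₂ : ∀ s : ℝ, 0 ≤ s → ‖expOp A₂ s‖ ≤ 1) :
    ∃ C > 0, ∀ τ : ℝ, 0 ≤ τ →
      ‖((T1 A₁ B₁ τ).comp (T2 A₂ B₂ τ) - (T2 A₂ B₂ τ).comp (T1 A₁ B₁ τ)).comp
          (opA A₁inv A₂inv)‖ ≤ C * τ ^ 2 :=
  commutator_comp_opAinv_norm_le_general A₁ A₂ B₁ B₂ A₁inv A₂inv hA₁inv' hA₂inv' hA₁ hA₂
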